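/- arXiv:2502.00086 — 3 statements merged into one kernel-verified Lean document; each statement's English description precedes it below -/
import Mathlib

section
/- Let X be a complete metric space and μ a compactly supported probability measure on Lipschitz self-maps of X with χ_μ < 0 and E_{g∼μ}[ρ(g)^t] < ∞ for all t ∈ ℝ, with unique stationary measure ν. Then there exists α = α(μ) > 0 such that for all R > 0 and all x ∈ X: ν({y ∈ X : d(x,y) ≥ R}) ≪_{μ,x} R^{−α}. -/
/-!
Pick `α ∈ (0, 1]` with `c = E[ρ(g)^α] < 1`: it exists because `E[ρ^t] ≤ 1 + t χ_μ + O(t²)` as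
`t → 0⁺`. Fix `x`, a level `M`, and set `Φ(s) = ∫ min (s d(x,y)^α) M dν(y)`. As `t ↦ t^α` is
subadditive, `d(x, g y)^α ≤ A^α + ρ(g)^α d(x,y)^α` where `A` bounds `d(x, g x)`, so stationarity
gives `Φ(s) ≤ s A^α + E[Φ(s ρ(g)^α)]`. Iterating this from the crude bound
`Φ(s) ≤ s D + M ν(d^α > D)` and letting first the number of iterations, then `D`, tend to
infinity yields `Φ(1) ≤ A^α / (1 - c)` for every `M`. With `M = R^α`, Markov's inequality
`R^α ν(d ≥ R) ≤ Φ(1)` concludes. In the code `Φ` is `truncatedMoment ν x α M`.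
-/

open MeasureTheory ProbabilityTheory Filter Real

noncomputable def lipConst {X : Type*} [MetricSpace X] (g : X → X) : ℝ :=
  sInf {ρ : ℝ | 0 < ρ ∧ ∀ x y : X, dist (g x) (g y) ≤ ρ * dist x y}

/-- `ν` is `μ`-stationary: `μ * ν = ν`. -/
def IsStationaryMeasure {X : Type*} [MetricSpace X] [MeasurableSpace X]
    [MeasurableSpace (X → X)] (μ : Measure (X → X)) (ν : Measure X) : Prop :=
  ∀ f : BoundedContinuousFunction X ℝ,
    ∫ g, ∫ x, f (g x) ∂ν ∂μ = ∫ x, f x ∂ν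

open Topology

section LipConst

variable {X : Type*} [MetricSpace X]

theorem lipConst_nonneg (g : X → X) : 0 ≤ lipConst g :=
  Real.sInf_nonneg fun _ hρ => hρ.1.le

theorem LipschitzWith.dist_le_lipConst_mul {K : NNReal} {g : X → X} (hg : LipschitzWith K g)
    (a b : X) : dist (g a) (g b) ≤ lipConst g * dist a b := by
  rcases (dist_nonneg (x := a) (y := b)).eq_or_lt with hab | hab
  · simp [dist_eq_zero.1 hab.symm]
  have hK : (K : ℝ) + 1 ∈ {ρ : ℝ | 0 < ρ ∧ ∀ x y : X, dist (g x) (g y) ≤ ρ * dist x y} :=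
    ⟨by positivity, fun x y => (hg.dist_le_mul x y).trans
      (by nlinarith [dist_nonneg (x := x) (y := y)])⟩
  rw [← div_le_iff₀ hab]
  exact le_csInf ⟨_, hK⟩ fun ρ hρ => (div_le_iff₀ hab).2 (hρ.2 a b)

end LipConst

theorem Real.exp_le_one_add_add_sq_mul_max (u : ℝ) :
    exp u ≤ 1 + u + u ^ 2 * max 1 (exp u) := by
  have hinv : exp (-u) * exp u = 1 := by rw [← exp_add]; simp
  have hneg := add_one_le_exp (-u)
  -- equivalent to `1 - u ≤ exp (-u)`
  have key : exp u - 1 - u ≤ u * (exp u - 1) := by nlinarith [exp_pos u]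
  rcases le_total 0 u with hu | hu
  · have : exp u - 1 ≤ u * exp u := by nlinarith [exp_pos u]
    nlinarith [le_max_right 1 (exp u)]
  · have : exp u ≤ 1 := exp_le_one_iff.mpr hu
    nlinarith [le_max_left 1 (exp u), add_one_le_exp u]

theorem Real.rpow_le_max_one {y t : ℝ} (hy : 0 ≤ y) (ht₀ : 0 ≤ t) (ht₁ : t ≤ 1) :
    y ^ t ≤ max 1 y := by
  rcases le_total 1 y with h | h
  · exact (rpow_le_rpow_of_exponent_le h ht₁).trans_eq (rpow_one y) |>.trans (le_max_right _ _)
  · exact (rpow_le_one hy h ht₀).trans (le_max_left _ _)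

theorem Real.rpow_le_one_add_mul_log_add_sq {y t : ℝ} (hy : 0 ≤ y) (ht₀ : 0 ≤ t) (ht₁ : t ≤ 1) :
    y ^ t ≤ 1 + t * log y + t ^ 2 * (log y ^ 2 * max 1 y) := by
  rcases hy.eq_or_lt with rfl | hy
  · rcases ht₀.eq_or_lt with rfl | ht
    · simp
    · simp [zero_rpow ht.ne']
  have hexp : y ^ t = exp (t * log y) := by rw [rpow_def_of_pos hy, mul_comm]
  calc y ^ t ≤ 1 + t * log y + (t * log y) ^ 2 * max 1 (y ^ t) := by
        simpa [hexp] using exp_le_one_add_add_sq_mul_max (t * log y)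
    _ ≤ 1 + t * log y + t ^ 2 * (log y ^ 2 * max 1 y) := by
        rw [mul_pow, mul_assoc]
        gcongr 1 + _ + _ * (_ * ?_)
        exact max_le (le_max_left _ _) (rpow_le_max_one hy.le ht₀ ht₁)

theorem Real.sq_log_mul_max_one_le {y : ℝ} (hy : 0 ≤ y) :
    log y ^ 2 * max 1 y ≤ y ^ (3 : ℝ) + y ^ (-2 : ℝ) := by
  rcases hy.eq_or_lt with rfl | hy
  · simp
  have h3 : y ^ (3 : ℝ) = y ^ 3 := by exact_mod_cast rpow_natCast y 3
  have h2 : y ^ (-2 : ℝ) = (y ^ 2)⁻¹ := by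
    rw [rpow_neg hy.le]; exact_mod_cast congrArg Inv.inv (rpow_natCast y 2)
  rcases le_total 1 y with h | h
  · have hl0 := log_nonneg h
    have : 0 ≤ y ^ (-2 : ℝ) := rpow_nonneg hy.le _
    have hl : log y ≤ y := (log_le_sub_one_of_pos hy).trans (by linarith)
    rw [max_eq_right h, h3]
    nlinarith [mul_le_mul hl hl hl0 hy.le]
  · have hl : -log y ≤ y⁻¹ := by
      have := log_le_sub_one_of_pos (inv_pos.2 hy)
      rw [log_inv] at this; linarith
    have hl0 : log y ≤ 0 := log_nonpos hy.le h
    have : 0 ≤ y ^ (3 : ℝ) := rpow_nonneg hy.le _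
    rw [max_eq_left h, mul_one, h2, ← inv_pow]
    nlinarith [mul_le_mul hl hl (by linarith) (inv_pos.2 hy).le]

theorem exists_integral_rpow_lt_one {Ω : Type*} [MeasurableSpace Ω] {P : Measure Ω}
    [IsProbabilityMeasure P] {L : Ω → ℝ} (hL : ∀ ω, 0 ≤ L ω)
    (hmom : ∀ t : ℝ, Integrable (fun ω => L ω ^ t) P) (hlog : ∫ ω, log (L ω) ∂P < 0) :
    ∃ α : ℝ, 0 < α ∧ α ≤ 1 ∧ ∫ ω, L ω ^ α ∂P < 1 := by
  have hLm : AEMeasurable L P := by simpa using (hmom 1).aemeasurable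
  have hlogm : AEMeasurable (fun ω => log (L ω)) P := measurable_log.comp_aemeasurable hLm
  set Q := fun ω => log (L ω) ^ 2 * max 1 (L ω)
  have hQ0 : ∀ ω, 0 ≤ Q ω := fun ω => by positivity
  have hQ : Integrable Q P :=
    ((hmom 3).add (hmom (-2))).mono' (by fun_prop : AEMeasurable Q P).aestronglyMeasurable <|
      .of_forall fun ω => by
      simpa [Real.norm_eq_abs, abs_of_nonneg (hQ0 ω)] using sq_log_mul_max_one_le (hL ω)
  have hlogint : Integrable (fun ω => log (L ω)) P :=
    ((integrable_const 1).add hQ).mono' hlogm.aestronglyMeasurable <| .of_forall fun ω => by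
      have : log (L ω) ^ 2 ≤ Q ω := le_mul_of_one_le_right (sq_nonneg _) (le_max_left _ _)
      rw [Real.norm_eq_abs, Pi.add_apply]
      nlinarith [sq_abs (log (L ω)), sq_nonneg (|log (L ω)| - 1)]
  set χ := ∫ ω, log (L ω) ∂P
  set K := ∫ ω, Q ω ∂P
  have hK : 0 ≤ K := integral_nonneg hQ0
  set α := min 1 (-χ / (2 * (K + 1)))
  have hα₀ : 0 < α := lt_min one_pos (div_pos (neg_pos.2 hlog) (by positivity))
  have hα₁ : α ≤ 1 := min_le_left _ _
  have hαK : α * K ≤ -χ / 2 := by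
    calc α * K ≤ -χ / (2 * (K + 1)) * (K + 1) :=
          mul_le_mul (min_le_right _ _) (by linarith) hK (div_nonneg (by linarith) (by positivity))
      _ = -χ / 2 := by field_simp
  have hlin : Integrable (fun ω => 1 + α * log (L ω)) P :=
    (integrable_const 1).add (hlogint.const_mul α)
  refine ⟨α, hα₀, hα₁, ?_⟩
  calc ∫ ω, L ω ^ α ∂P ≤ ∫ ω, (1 + α * log (L ω) + α ^ 2 * Q ω) ∂P :=
        integral_mono (hmom α) (hlin.add (hQ.const_mul _)) fun ω =>
          rpow_le_one_add_mul_log_add_sq (hL ω) hα₀.le hα₁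
    _ = 1 + α * χ + α ^ 2 * K := by
        rw [integral_add hlin (hQ.const_mul _), integral_add (integrable_const 1)
          (hlogint.const_mul α), integral_const_mul, integral_const_mul,
          integral_const, probReal_univ, one_smul]
    _ < 1 := by nlinarith

theorem le_mul_div_one_sub_add_of_le_mul_add_integral {Ω : Type*} [MeasurableSpace Ω]
    {P : Measure Ω} [IsProbabilityMeasure P] {Φ : ℝ → ℝ} {Λ : Ω → ℝ} {a B E : ℝ}
    (hΛ : ∀ ω, 0 ≤ Λ ω) (hΛint : Integrable Λ P) (hc : ∫ ω, Λ ω ∂P < 1)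
    (hΦint : ∀ s, 0 ≤ s → Integrable (fun ω => Φ (s * Λ ω)) P)
    (hstep : ∀ s, 0 ≤ s → Φ s ≤ s * a + ∫ ω, Φ (s * Λ ω) ∂P)
    (hbase : ∀ s, 0 ≤ s → Φ s ≤ s * B + E) {s : ℝ} (hs : 0 ≤ s) :
    Φ s ≤ s * (a / (1 - ∫ ω, Λ ω ∂P)) + E := by
  set c := ∫ ω, Λ ω ∂P
  have hc₀ : 0 ≤ c := integral_nonneg hΛ
  have hc₁ : 1 - c ≠ 0 := by linarith
  have hiter : ∀ n : ℕ, ∀ s, 0 ≤ s → Φ s ≤ s * ((1 - c ^ n) * a / (1 - c) + c ^ n * B) + E := by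
    intro n
    induction n with
    | zero => simpa using hbase
    | succ n ih =>
      intro s hs
      set K := (1 - c ^ n) * a / (1 - c) + c ^ n * B
      have hint : Integrable (fun ω => s * K * Λ ω + E) P :=
        (hΛint.const_mul (s * K)).add (integrable_const E)
      calc Φ s ≤ s * a + ∫ ω, Φ (s * Λ ω) ∂P := hstep s hs
        _ ≤ s * a + ∫ ω, (s * K * Λ ω + E) ∂P := add_le_add le_rfl (integral_mono (hΦint s hs)
            hint fun ω => (ih _ (mul_nonneg hs (hΛ ω))).trans_eq (by ring))
        _ = s * ((1 - c ^ (n + 1)) * a / (1 - c) + c ^ (n + 1) * B) + E := by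
          rw [integral_add (hΛint.const_mul (s * K)) (integrable_const E), integral_const_mul,
            integral_const, probReal_univ, one_smul]
          change s * a + (s * K * c + E) = _
          simp only [K]
          field_simp
          ring
  have hlim : Tendsto (fun n : ℕ => s * ((1 - c ^ n) * a / (1 - c) + c ^ n * B) + E) atTop
      (𝓝 (s * ((1 - 0) * a / (1 - c) + 0 * B) + E)) := by
    have hpow := tendsto_pow_atTop_nhds_zero_of_lt_one hc₀ hc
    exact ((((tendsto_const_nhds.sub hpow).mul_const a).div_const _).add
      (hpow.mul_const B)).const_mul s |>.add_const E
  simpa using ge_of_tendsto' hlim fun n => hiter n s hs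

theorem tendsto_measureReal_setOf_lt_atTop {α : Type*} [MeasurableSpace α] (ν : Measure α)
    [IsFiniteMeasure ν] {u : α → ℝ} (hu : Measurable u) :
    Tendsto (fun D : ℝ => ν.real {y | D < u y}) atTop (𝓝 0) := by
  have hempty : ⋂ D : ℝ, {y | D < u y} = ∅ :=
    Set.eq_empty_of_forall_notMem fun y hy => lt_irrefl (u y) (Set.mem_iInter.1 hy (u y))
  have h := tendsto_measure_iInter_atTop (μ := ν) (s := fun D : ℝ => {y | D < u y})
    (fun D => (measurableSet_lt measurable_const hu).nullMeasurableSet)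
    (fun _ _ hD _ hy => hD.trans_lt hy) ⟨0, measure_ne_top ν _⟩
  rw [hempty, measure_empty] at h
  exact (ENNReal.tendsto_toReal ENNReal.zero_ne_top).comp h

section TruncatedMoment

variable {X : Type*} [MetricSpace X] {x : X} {α M s : ℝ}

theorem min_mul_dist_rpow_nonneg (hs : 0 ≤ s) (hM : 0 ≤ M) (y : X) :
    0 ≤ min (s * dist x y ^ α) M :=
  le_min (mul_nonneg hs (rpow_nonneg dist_nonneg α)) hM

theorem exists_boundedContinuousFunction_eq_min_mul_dist_rpow (x : X) (hs : 0 ≤ s) (hM : 0 ≤ M)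
    (hα : 0 ≤ α) :
    ∃ f : BoundedContinuousFunction X ℝ, ⇑f = fun y => min (s * dist x y ^ α) M := by
  have hcont : Continuous fun y => min (s * dist x y ^ α) M :=
    (continuous_const.mul ((continuous_const.dist continuous_id).rpow_const
      fun _ => Or.inr hα)).min continuous_const
  refine ⟨.ofNormedAddCommGroup _ hcont M fun y => ?_, rfl⟩
  rw [Real.norm_eq_abs, abs_of_nonneg (min_mul_dist_rpow_nonneg hs hM y)]
  exact min_le_right _ _

variable [MeasurableSpace X] {ν : Measure X}

noncomputable def truncatedMoment (ν : Measure X) (x : X) (α M s : ℝ) : ℝ :=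
  ∫ y, min (s * dist x y ^ α) M ∂ν

theorem truncatedMoment_nonneg (hs : 0 ≤ s) (hM : 0 ≤ M) : 0 ≤ truncatedMoment ν x α M s :=
  integral_nonneg (min_mul_dist_rpow_nonneg hs hM)

theorem truncatedMoment_le [IsProbabilityMeasure ν] (hs : 0 ≤ s) (hM : 0 ≤ M) :
    truncatedMoment ν x α M s ≤ M := by
  calc truncatedMoment ν x α M s ≤ ∫ _, M ∂ν :=
        integral_mono_of_nonneg (.of_forall (min_mul_dist_rpow_nonneg hs hM)) (integrable_const M)
          (.of_forall fun _ => min_le_right _ _)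
    _ = M := by simp

variable [BorelSpace X]

theorem integrable_min_mul_dist_rpow [IsFiniteMeasure ν] (x : X) (hs : 0 ≤ s) (hM : 0 ≤ M)
    (hα : 0 ≤ α) : Integrable (fun y => min (s * dist x y ^ α) M) ν := by
  obtain ⟨f, hf⟩ := exists_boundedContinuousFunction_eq_min_mul_dist_rpow x hs hM hα
  exact hf ▸ f.integrable ν

theorem measurable_truncatedMoment [SFinite ν] : Measurable (truncatedMoment ν x α M) := by
  have h : Measurable fun p : ℝ × X => min (p.1 * dist x p.2 ^ α) M := by fun_prop
  exact h.stronglyMeasurable.integral_prod_right'.measurable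

end TruncatedMoment

theorem IsStationaryMeasure.integral_eq_integral_integral_comp {X : Type*} [MetricSpace X]
    [MeasurableSpace X] [BorelSpace X] [MeasurableSpace (X → X)]
    (heval : Measurable fun p : (X → X) × X => p.1 p.2) {Ω : Type*} [MeasurableSpace Ω]
    {P : Measure Ω} {μ : Measure (X → X)} {ν : Measure X} [SFinite ν]
    (hν : IsStationaryMeasure μ ν) {γ : Ω → X → X} (hγ : Measurable γ) (hmap : P.map γ = μ)
    (f : BoundedContinuousFunction X ℝ) : ∫ y, f y ∂ν = ∫ ω, ∫ y, f (γ ω y) ∂ν ∂P := by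
  have hF : StronglyMeasurable fun g : X → X => ∫ y, f (g y) ∂ν :=
    (f.continuous.measurable.comp heval).stronglyMeasurable.integral_prod_right'
  rw [← hν f, ← hmap, integral_map hγ.aemeasurable hF.aestronglyMeasurable]

theorem min_mul_le_mul_add_min {s u a v M : ℝ} (hs : 0 ≤ s) (ha : 0 ≤ a) (huv : u ≤ a + v) :
    min (s * u) M ≤ s * a + min (s * v) M := by
  rw [← min_add_add_left]
  exact min_le_min (by nlinarith) (le_add_of_nonneg_left (mul_nonneg hs ha))

section Contraction

variable {X : Type*} [MetricSpace X] {g : X → X} {L A α : ℝ}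

theorem dist_rpow_apply_le (hg : ∀ a b, dist (g a) (g b) ≤ L * dist a b) (hL : 0 ≤ L) {x : X}
    (hA : dist x (g x) ≤ A) (hα₀ : 0 ≤ α) (hα₁ : α ≤ 1) (y : X) :
    dist x (g y) ^ α ≤ A ^ α + L ^ α * dist x y ^ α :=
  calc dist x (g y) ^ α ≤ (A + L * dist x y) ^ α :=
        rpow_le_rpow dist_nonneg ((dist_triangle _ (g x) _).trans (add_le_add hA (hg x y))) hα₀
    _ ≤ A ^ α + (L * dist x y) ^ α :=
        rpow_add_le_add_rpow (dist_nonneg.trans hA) (by positivity) hα₀ hα₁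
    _ = A ^ α + L ^ α * dist x y ^ α := by rw [mul_rpow hL dist_nonneg]

end Contraction

section Stationary

variable {X : Type*} [MetricSpace X] [MeasurableSpace X] [BorelSpace X] {x : X} {α M s : ℝ}
  {ν : Measure X} [IsProbabilityMeasure ν] {Ω : Type*} [MeasurableSpace Ω] {P : Measure Ω}
  [IsProbabilityMeasure P]

theorem integrable_truncatedMoment_mul {Λ : Ω → ℝ} (hΛ : ∀ ω, 0 ≤ Λ ω) (hΛm : AEMeasurable Λ P)
    (hs : 0 ≤ s) (hM : 0 ≤ M) : Integrable (fun ω => truncatedMoment ν x α M (s * Λ ω)) P :=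
  (integrable_const M).mono'
    (measurable_truncatedMoment.comp_aemeasurable (hΛm.const_mul s)).aestronglyMeasurable
    (.of_forall fun ω => by
      rw [Real.norm_of_nonneg (truncatedMoment_nonneg (mul_nonneg hs (hΛ ω)) hM)]
      exact truncatedMoment_le (mul_nonneg hs (hΛ ω)) hM)

theorem truncatedMoment_le_mul_add_integral [MeasurableSpace (X → X)]
    (heval : Measurable fun p : (X → X) × X => p.1 p.2) {μ : Measure (X → X)}
    (hν : IsStationaryMeasure μ ν) {γ : Ω → X → X} (hγ : Measurable γ) (hmap : P.map γ = μ)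
    {L : Ω → ℝ} (hLip : ∀ ω a b, dist (γ ω a) (γ ω b) ≤ L ω * dist a b) (hL : ∀ ω, 0 ≤ L ω)
    (hLm : AEMeasurable L P) {A : ℝ} (hA₀ : 0 ≤ A) (hA : ∀ᵐ ω ∂P, dist x (γ ω x) ≤ A)
    (hα₀ : 0 < α) (hα₁ : α ≤ 1) (hM : 0 ≤ M) (hs : 0 ≤ s) :
    truncatedMoment ν x α M s ≤ s * A ^ α + ∫ ω, truncatedMoment ν x α M (s * L ω ^ α) ∂P := by
  obtain ⟨f, hf⟩ := exists_boundedContinuousFunction_eq_min_mul_dist_rpow x hs hM hα₀.le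
  have hLα : ∀ ω, 0 ≤ L ω ^ α := fun ω => rpow_nonneg (hL ω) α
  have hint :=
    integrable_truncatedMoment_mul (ν := ν) (x := x) (α := α) hLα (hLm.pow_const α) hs hM
  have hpointwise : ∀ ω, dist x (γ ω x) ≤ A →
      ∫ y, f (γ ω y) ∂ν ≤ s * A ^ α + truncatedMoment ν x α M (s * L ω ^ α) := by
    intro ω hω
    calc ∫ y, f (γ ω y) ∂ν ≤ ∫ y, (s * A ^ α + min (s * L ω ^ α * dist x y ^ α) M) ∂ν := by
          refine integral_mono_of_nonneg (.of_forall fun y => ?_) ((integrable_const _).add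
            (integrable_min_mul_dist_rpow x (mul_nonneg hs (hLα ω)) hM hα₀.le))
            (.of_forall fun y => ?_)
          · simp only [hf]
            exact min_mul_dist_rpow_nonneg hs hM _
          · simp only [hf, mul_assoc]
            exact min_mul_le_mul_add_min hs (rpow_nonneg hA₀ _)
              (dist_rpow_apply_le (hLip ω) (hL ω) hω hα₀.le hα₁ y)
      _ = s * A ^ α + truncatedMoment ν x α M (s * L ω ^ α) := by
          rw [integral_add (integrable_const _)
            (integrable_min_mul_dist_rpow x (mul_nonneg hs (hLα ω)) hM hα₀.le), integral_const,
            probReal_univ, one_smul]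
          rfl
  calc truncatedMoment ν x α M s = ∫ y, f y ∂ν := by simp only [hf]; rfl
    _ = ∫ ω, ∫ y, f (γ ω y) ∂ν ∂P := hν.integral_eq_integral_integral_comp heval hγ hmap f
    _ ≤ ∫ ω, (s * A ^ α + truncatedMoment ν x α M (s * L ω ^ α)) ∂P := by
        refine integral_mono_of_nonneg (.of_forall fun ω => integral_nonneg fun y => ?_)
          ((integrable_const _).add hint) (hA.mono hpointwise)
        simp only [hf]
        exact min_mul_dist_rpow_nonneg hs hM _
    _ = s * A ^ α + ∫ ω, truncatedMoment ν x α M (s * L ω ^ α) ∂P := by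
        rw [integral_add (integrable_const _) hint, integral_const, probReal_univ, one_smul]

end Stationary

section Tail

variable {X : Type*} [MetricSpace X] [MeasurableSpace X] [BorelSpace X] {x : X} {α M s : ℝ}
  {ν : Measure X} [IsProbabilityMeasure ν]

theorem truncatedMoment_le_mul_add_measureReal (hs : 0 ≤ s) (hM : 0 ≤ M) {D : ℝ} (hD : 0 ≤ D) :
    truncatedMoment ν x α M s ≤ s * D + M * ν.real {y | D < dist x y ^ α} := by
  have hS : MeasurableSet {y | D < dist x y ^ α} := measurableSet_lt measurable_const (by fun_prop)
  calc truncatedMoment ν x α M s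
        ≤ ∫ y, (s * D + {y | D < dist x y ^ α}.indicator (fun _ => M) y) ∂ν := by
        refine integral_mono_of_nonneg (.of_forall (min_mul_dist_rpow_nonneg hs hM))
          ((integrable_const _).add ((integrable_const M).indicator hS)) (.of_forall fun y => ?_)
        dsimp only
        by_cases hy : y ∈ {y | D < dist x y ^ α}
        · rw [Set.indicator_of_mem hy]
          exact (min_le_right _ _).trans (le_add_of_nonneg_left (mul_nonneg hs hD))
        · rw [Set.indicator_of_notMem hy, add_zero]
          exact (min_le_left _ _).trans (mul_le_mul_of_nonneg_left (not_lt.1 hy) hs)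
    _ = s * D + M * ν.real {y | D < dist x y ^ α} := by
        rw [integral_add (integrable_const _) ((integrable_const M).indicator hS), integral_const,
          integral_indicator_const M hS, probReal_univ, one_smul, smul_eq_mul, mul_comm M]

theorem rpow_mul_measureReal_le_truncatedMoment {R : ℝ} (hR : 0 ≤ R) (hα : 0 ≤ α) :
    R ^ α * ν.real {y | R ≤ dist x y} ≤ truncatedMoment ν x α (R ^ α) 1 := by
  have hS : MeasurableSet {y | R ≤ dist x y} := measurableSet_le measurable_const (by fun_prop)
  calc R ^ α * ν.real {y | R ≤ dist x y}
        = ∫ y, {y | R ≤ dist x y}.indicator (fun _ => R ^ α) y ∂ν := by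
        rw [integral_indicator_const _ hS, smul_eq_mul, mul_comm]
    _ ≤ truncatedMoment ν x α (R ^ α) 1 := by
        refine integral_mono ((integrable_const _).indicator hS)
          (integrable_min_mul_dist_rpow x zero_le_one (rpow_nonneg hR _) hα) fun y => ?_
        by_cases hy : y ∈ {y | R ≤ dist x y}
        · rw [Set.indicator_of_mem hy, one_mul, min_eq_right (rpow_le_rpow hR hy hα)]
        · rw [Set.indicator_of_notMem hy]
          exact min_mul_dist_rpow_nonneg zero_le_one (rpow_nonneg hR _) y

end Tail

theorem truncatedMoment_one_le {X : Type*} [MetricSpace X] [MeasurableSpace X] [BorelSpace X]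
    [MeasurableSpace (X → X)] (heval : Measurable fun p : (X → X) × X => p.1 p.2)
    {Ω : Type*} [MeasurableSpace Ω] {P : Measure Ω} [IsProbabilityMeasure P]
    {μ : Measure (X → X)} {ν : Measure X} [IsProbabilityMeasure ν] (hν : IsStationaryMeasure μ ν)
    {γ : Ω → X → X} (hγ : Measurable γ) (hmap : P.map γ = μ) {L : Ω → ℝ}
    (hLip : ∀ ω a b, dist (γ ω a) (γ ω b) ≤ L ω * dist a b) (hL : ∀ ω, 0 ≤ L ω)
    (hLm : AEMeasurable L P) {x : X} {A : ℝ} (hA₀ : 0 ≤ A) (hA : ∀ᵐ ω ∂P, dist x (γ ω x) ≤ A)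
    {α M : ℝ} (hα₀ : 0 < α) (hα₁ : α ≤ 1) (hM : 0 ≤ M)
    (hLα : Integrable (fun ω => L ω ^ α) P) (hc : ∫ ω, L ω ^ α ∂P < 1) :
    truncatedMoment ν x α M 1 ≤ A ^ α / (1 - ∫ ω, L ω ^ α ∂P) := by
  have hLα₀ : ∀ ω, 0 ≤ L ω ^ α := fun ω => rpow_nonneg (hL ω) α
  have hD : ∀ D, 0 ≤ D → truncatedMoment ν x α M 1 ≤
      A ^ α / (1 - ∫ ω, L ω ^ α ∂P) + M * ν.real {y | D < dist x y ^ α} := fun D hD => by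
    simpa using le_mul_div_one_sub_add_of_le_mul_add_integral hLα₀ hLα hc
      (fun s hs => integrable_truncatedMoment_mul hLα₀ (hLm.pow_const α) hs hM)
      (fun s hs => truncatedMoment_le_mul_add_integral heval hν hγ hmap hLip hL hLm hA₀ hA hα₀
        hα₁ hM hs)
      (fun s hs => truncatedMoment_le_mul_add_measureReal hs hM hD) zero_le_one
  have hlim := ((tendsto_measureReal_setOf_lt_atTop ν
    (u := fun y => dist x y ^ α) (by fun_prop)).const_mul M).const_add
    (A ^ α / (1 - ∫ ω, L ω ^ α ∂P))
  simpa using ge_of_tendsto hlim ((eventually_ge_atTop 0).mono hD)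

theorem stationary_polynomial_tail_decay_general
    {X : Type*} [MetricSpace X] [MeasurableSpace X] [BorelSpace X]
    [MeasurableSpace (X → X)]
    (heval : Measurable fun p : (X → X) × X => p.1 p.2)
    {Ω : Type*} [MeasurableSpace Ω] (P : Measure Ω) [IsProbabilityMeasure P]
    (μ : Measure (X → X))
    (γ : ℕ → Ω → X → X)
    (hmeas : ∀ n, Measurable (γ n))
    (hident : ∀ n, Measure.map (γ n) P = μ)
    (hLip : ∀ n ω, ∃ K : NNReal, LipschitzWith K (γ n ω))
    (hmom : ∀ t : ℝ, Integrable (fun ω => lipConst (γ 0 ω) ^ t) P)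
    (hchi : (∫ ω, log (lipConst (γ 0 ω)) ∂P) < 0)
    (hA : ∀ x : X, ∃ A : ℝ, ∀ n, ∀ᵐ ω ∂P, dist x (γ n ω x) ≤ A)
    (ν : Measure X) [IsProbabilityMeasure ν] (hν : IsStationaryMeasure μ ν) :
    ∃ α > (0 : ℝ), ∀ x : X, ∃ C > (0 : ℝ), ∀ R > (0 : ℝ),
      (ν {y : X | R ≤ dist x y}).toReal ≤ C * R ^ (-α) := by
  set L := fun ω => lipConst (γ 0 ω)
  have hL : ∀ ω, 0 ≤ L ω := fun ω => lipConst_nonneg _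
  have hLip₀ : ∀ ω a b, dist (γ 0 ω a) (γ 0 ω b) ≤ L ω * dist a b := fun ω =>
    (hLip 0 ω).choose_spec.dist_le_lipConst_mul
  obtain ⟨α, hα₀, hα₁, hc⟩ := exists_integral_rpow_lt_one hL hmom hchi
  refine ⟨α, hα₀, fun x => ?_⟩
  obtain ⟨A, hA⟩ := hA x
  set K := max A 0 ^ α / (1 - ∫ ω, L ω ^ α ∂P)
  have hK : 0 ≤ K := div_nonneg (rpow_nonneg (le_max_right _ _) _) (by linarith)
  refine ⟨K + 1, by linarith, fun R hR => ?_⟩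
  have hRα : 0 < R ^ α := rpow_pos_of_pos hR α
  have hmarkov : R ^ α * ν.real {y | R ≤ dist x y} ≤ K :=
    (rpow_mul_measureReal_le_truncatedMoment hR.le hα₀.le).trans <|
      truncatedMoment_one_le heval hν (hmeas 0) (hident 0) hLip₀ hL
        (by simpa using (hmom 1).aemeasurable) (le_max_right A 0)
        ((hA 0).mono fun _ h => h.trans (le_max_left A 0)) hα₀ hα₁ hRα.le (hmom α) hc
  rw [rpow_neg hR.le, ← div_eq_mul_inv, le_div_iff₀ hRα]
  change ν.real _ * R ^ α ≤ _
  linarith [mul_comm (R ^ α) (ν.real {y | R ≤ dist x y})]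

/-- Polynomial tail decay: let `X` be a complete metric space and `μ` a compactly supported
probability measure on Lipschitz self-maps with `χ_μ < 0` and `E[ρ(g)^t] < ∞` for all `t ∈ ℝ`,
with unique stationary measure `ν`. Then there is `α = α(μ) > 0` such that for all `R > 0` and
`x ∈ X`, `ν({y : d(x,y) ≥ R}) ≪_{μ,x} R^{−α}`. -/
theorem stationary_polynomial_tail_decay
    {X : Type*} [MetricSpace X] [CompleteSpace X] [MeasurableSpace X] [BorelSpace X]
    [MeasurableSpace (X → X)]
    (heval : Measurable fun p : (X → X) × X => p.1 p.2)
    {Ω : Type*} [MeasurableSpace Ω] (P : Measure Ω) [IsProbabilityMeasure P]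
    (μ : Measure (X → X)) [IsProbabilityMeasure μ]
    (γ : ℕ → Ω → X → X)
    (hmeas : ∀ n, Measurable (γ n))
    (hindep : iIndepFun γ P)
    (hident : ∀ n, Measure.map (γ n) P = μ)
    (hLip : ∀ n ω, ∃ K : NNReal, LipschitzWith K (γ n ω))
    (hmom : ∀ t : ℝ, Integrable (fun ω => lipConst (γ 0 ω) ^ t) P)
    (hchi : (∫ ω, log (lipConst (γ 0 ω)) ∂P) < 0)
    (hA : ∀ x : X, ∃ A : ℝ, ∀ n, ∀ᵐ ω ∂P, dist x (γ n ω x) ≤ A)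
    (ν : Measure X) [IsProbabilityMeasure ν] (hν : IsStationaryMeasure μ ν) :
    ∃ α > (0 : ℝ), ∀ x : X, ∃ C > (0 : ℝ), ∀ R > (0 : ℝ),
      (ν {y : X | R ≤ dist x y}).toReal ≤ C * R ^ (-α) :=
  stationary_polynomial_tail_decay_general heval P μ γ hmeas hident hLip hmom hchi hA ν hν
end

section
/- Let pₙ = (6/π²)·n^{−2} and aₙ = 1/n if n is not a perfect square, aₙ = (√n)^{√n} if n is a perfect square. Then the measure μ = Σₙ pₙ δ_{fₙ} (with fₙ(x) = aₙ·max(x−n, 0)) satisfies: χ_μ = Σₙ pₙ log aₙ ∈ (−∞, 0), while Σₙ pₙ·aₙ^t = ∞ for every t > 0. -/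
open Real

/-- `pₙ = 6/(π²n²)`. -/
noncomputable def pSeq (n : ℕ) : ℝ := 6 / (π ^ 2 * (n : ℝ) ^ 2)

/-- `aₙ = 1/n` if `n` is not a perfect square, `aₙ = (√n)^{√n}` if `n` is a perfect square. -/
noncomputable def aSeq (n : ℕ) : ℝ :=
  if IsSquare n then Real.sqrt n ^ Real.sqrt n else 1 / n

/-!
On a square `n = k²` the term `pₙ log aₙ` equals `(6/π²) log k / k³ ≤ (6/π²) / (e k²)`, so the
squares contribute at most `(6/π²)(π²/6 - 1)/e` to `χ_μ`. Every other term is negative, and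
`n = 2, 3` alone contribute `-(6/π²)(log 2 / 4 + log 3 / 9)`, which outweighs the squares.
For the moments, `p_{k²} a_{k²}^t = (6/π²) k^{kt - 4}` does not tend to `0`.
-/

open Filter Topology

lemma summable_log_div_rpow {s : ℝ} (hs : 1 < s) :
    Summable fun n : ℕ => log n / (n : ℝ) ^ s := by
  set ε := (s - 1) / 2 with hε_def
  have hε : 0 < ε := by linarith
  refine Summable.of_nonneg_of_le (fun n => div_nonneg (log_natCast_nonneg n) (by positivity))
    (fun n => ?_) ((summable_nat_rpow.2 (by linarith : ε - s < -1)).mul_left ε⁻¹)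
  rcases Nat.eq_zero_or_pos n with rfl | hn
  · simp only [CharP.cast_eq_zero, log_zero, zero_div]
    positivity
  have hn' : (0 : ℝ) < n := by exact_mod_cast hn
  calc log n / (n : ℝ) ^ s ≤ ((n : ℝ) ^ ε / ε) / (n : ℝ) ^ s := by
        gcongr; exact log_le_rpow_div hn'.le hε
    _ = ε⁻¹ * (n : ℝ) ^ (ε - s) := by rw [rpow_sub hn']; ring

lemma log_le_div_exp_one {x : ℝ} (hx : 0 < x) : log x ≤ x / exp 1 := by
  have := add_one_le_exp (log x - 1)
  rw [exp_sub, exp_log hx] at this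
  linarith

-- The `k = 1` correction makes the right side sum to `(ζ(2) - 1) / e`; the left side vanishes there.
lemma log_natCast_div_pow_three_le (k : ℕ) :
    log k / (k : ℝ) ^ 3 ≤ (1 / (k : ℝ) ^ 2 - if k = 1 then 1 else 0) / exp 1 := by
  rcases lt_or_ge k 2 with hk | hk
  · interval_cases k <;> simp
  have hk' : (0 : ℝ) < k := by positivity
  rw [if_neg (by omega), sub_zero]
  calc log k / (k : ℝ) ^ 3 ≤ (k / exp 1) / (k : ℝ) ^ 3 := by
        gcongr; exact log_le_div_exp_one hk'
    _ = (1 / (k : ℝ) ^ 2) / exp 1 := by field_simp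

lemma summable_log_natCast_div_pow_three : Summable fun k : ℕ => log k / (k : ℝ) ^ 3 := by
  refine (summable_log_div_rpow (s := 3) (by norm_num)).congr fun k => ?_
  rw [rpow_ofNat]

lemma tsum_log_natCast_div_pow_three_le :
    ∑' k : ℕ, log k / (k : ℝ) ^ 3 ≤ (π ^ 2 / 6 - 1) / exp 1 :=
  hasSum_le log_natCast_div_pow_three_le summable_log_natCast_div_pow_three.hasSum
    ((hasSum_zeta_two.sub (hasSum_ite_eq 1 1)).div_const _)

lemma aSeq_sq (k : ℕ) : aSeq (k ^ 2) = (k : ℝ) ^ (k : ℝ) := by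
  rw [aSeq, if_pos ⟨k, sq k⟩, Nat.cast_pow, sqrt_sq k.cast_nonneg]

lemma aSeq_of_not_isSquare {n : ℕ} (hn : ¬ IsSquare n) : aSeq n = (n : ℝ)⁻¹ := by
  rw [aSeq, if_neg hn, one_div]

noncomputable def chiSummand (n : ℕ) : ℝ := pSeq n * log (aSeq n)

lemma chiSummand_sq (k : ℕ) : chiSummand (k ^ 2) = 6 / π ^ 2 * (log k / (k : ℝ) ^ 3) := by
  rcases eq_or_ne k 0 with rfl | hk
  · simp [chiSummand, pSeq]
  have hk' : (0 : ℝ) < k := by positivity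
  rw [chiSummand, aSeq_sq, log_rpow hk', pSeq]
  field_simp
  push_cast
  ring

lemma chiSummand_of_not_isSquare {n : ℕ} (hn : ¬ IsSquare n) :
    chiSummand n = -(6 / π ^ 2 * (log n / (n : ℝ) ^ 2)) := by
  rw [chiSummand, aSeq_of_not_isSquare hn, log_inv, pSeq]
  ring

-- `pSeq 0 = 6 / 0 = 0`, which lets the series start at `n = 0` instead of `n = 1`.
lemma chiSummand_zero : chiSummand 0 = 0 := by
  simp [chiSummand, pSeq]

lemma hasSum_indicator_isSquare_chiSummand :
    HasSum ({n | IsSquare n}.indicator chiSummand)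
      (6 / π ^ 2 * ∑' k : ℕ, log k / (k : ℝ) ^ 3) := by
  have hinj : Function.Injective (· ^ 2 : ℕ → ℕ) := Nat.pow_left_injective two_ne_zero
  rw [← hinj.hasSum_iff]
  · have hcomp : {n | IsSquare n}.indicator chiSummand ∘ (· ^ 2) =
        fun k : ℕ => 6 / π ^ 2 * (log k / (k : ℝ) ^ 3) := by
      funext k
      rw [Function.comp_apply,
        Set.indicator_of_mem (show k ^ 2 ∈ {n | IsSquare n} from ⟨k, sq k⟩), chiSummand_sq]
    rw [hcomp]
    exact summable_log_natCast_div_pow_three.hasSum.mul_left _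
  · intro n hn
    refine Set.indicator_of_notMem (fun hsq => hn ?_) _
    obtain ⟨k, rfl⟩ := isSquare_iff_exists_sq n |>.1 hsq
    exact ⟨k, rfl⟩

lemma indicator_not_isSquare_chiSummand_nonpos (n : ℕ) :
    {n | IsSquare n}ᶜ.indicator chiSummand n ≤ 0 := by
  by_cases hn : IsSquare n
  · simp [hn]
  · rw [Set.indicator_of_mem hn, chiSummand_of_not_isSquare hn, neg_nonpos]
    have := log_natCast_nonneg n
    positivity

lemma summable_indicator_not_isSquare_chiSummand :
    Summable ({n | IsSquare n}ᶜ.indicator chiSummand) := by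
  refine Summable.of_norm_bounded
    (((summable_log_div_rpow (s := 2) one_lt_two).mul_left (6 / π ^ 2))) fun n => ?_
  rw [Real.norm_eq_abs, abs_of_nonpos (indicator_not_isSquare_chiSummand_nonpos n), rpow_ofNat]
  by_cases hn : IsSquare n
  · rw [Set.indicator_of_notMem (by simpa using hn), neg_zero]
    have := log_natCast_nonneg n
    positivity
  · rw [Set.indicator_of_mem hn, chiSummand_of_not_isSquare hn, neg_neg]

lemma summable_chiSummand : Summable chiSummand := by
  rw [← Set.indicator_self_add_compl {n | IsSquare n} chiSummand]
  exact hasSum_indicator_isSquare_chiSummand.summable.add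
    summable_indicator_not_isSquare_chiSummand

lemma pi_sq_div_six_sub_one_div_exp_one_lt :
    (π ^ 2 / 6 - 1) / exp 1 < log 2 / 4 + log 3 / 9 := by
  have hlog3 : log 2 ≤ log 3 := log_le_log two_pos (by norm_num)
  have hlog2 := log_two_gt_d9
  have hexp := exp_one_gt_d9
  have hpi : π ^ 2 < 3.15 ^ 2 := by gcongr; exact pi_lt_d2
  rw [div_lt_iff₀ (exp_pos 1)]
  nlinarith [mul_lt_mul'' hlog2 hexp (by norm_num) (by norm_num)]

lemma not_isSquare_two : ¬ IsSquare (2 : ℕ) :=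
  fun ⟨r, hr⟩ => Nat.not_exists_sq (m := 1) (by norm_num) (by norm_num) ⟨r, hr.symm⟩

lemma not_isSquare_three : ¬ IsSquare (3 : ℕ) :=
  fun ⟨r, hr⟩ => Nat.not_exists_sq (m := 1) (by norm_num) (by norm_num) ⟨r, hr.symm⟩

lemma tsum_indicator_not_isSquare_chiSummand_le :
    ∑' n, {n | IsSquare n}ᶜ.indicator chiSummand n ≤ chiSummand 2 + chiSummand 3 := by
  have h := summable_indicator_not_isSquare_chiSummand.neg.sum_le_tsum {2, 3}
    (fun n _ => neg_nonneg.2 (indicator_not_isSquare_chiSummand_nonpos n))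
  rw [tsum_neg, Finset.sum_pair (by norm_num),
    Set.indicator_of_mem (show 2 ∈ {n | IsSquare n}ᶜ from not_isSquare_two),
    Set.indicator_of_mem (show 3 ∈ {n | IsSquare n}ᶜ from not_isSquare_three)] at h
  linarith

lemma tsum_chiSummand_neg : ∑' n, chiSummand n < 0 := by
  have hsum := hasSum_indicator_isSquare_chiSummand.add
    summable_indicator_not_isSquare_chiSummand.hasSum
  simp only [Set.indicator_self_add_compl_apply] at hsum
  calc ∑' n, chiSummand n
      = 6 / π ^ 2 * ∑' k : ℕ, log k / (k : ℝ) ^ 3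
        + ∑' n, {n | IsSquare n}ᶜ.indicator chiSummand n := hsum.tsum_eq
    _ ≤ 6 / π ^ 2 * ((π ^ 2 / 6 - 1) / exp 1) + (chiSummand 2 + chiSummand 3) := by
      gcongr
      · exact tsum_log_natCast_div_pow_three_le
      · exact tsum_indicator_not_isSquare_chiSummand_le
    _ = 6 / π ^ 2 * ((π ^ 2 / 6 - 1) / exp 1 - (log 2 / 4 + log 3 / 9)) := by
      rw [chiSummand_of_not_isSquare not_isSquare_two,
        chiSummand_of_not_isSquare not_isSquare_three]
      push_cast
      ring
    _ < 0 := mul_neg_of_pos_of_neg (by positivity)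
      (sub_neg.2 pi_sq_div_six_sub_one_div_exp_one_lt)

lemma pSeq_mul_aSeq_rpow_sq_ge {k : ℕ} (hk : 1 ≤ k) {t : ℝ} (hkt : 4 ≤ k * t) :
    6 / π ^ 2 ≤ pSeq (k ^ 2) * aSeq (k ^ 2) ^ t := by
  have hk' : (1 : ℝ) ≤ k := by exact_mod_cast hk
  have hpow : (k : ℝ) ^ 4 ≤ aSeq (k ^ 2) ^ t := by
    rw [aSeq_sq, ← rpow_mul (by positivity), ← rpow_natCast]
    exact rpow_le_rpow_of_exponent_le hk' (by exact_mod_cast hkt)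
  calc 6 / π ^ 2 = pSeq (k ^ 2) * (k : ℝ) ^ 4 := by
        rw [pSeq]; field_simp; push_cast; ring
    _ ≤ pSeq (k ^ 2) * aSeq (k ^ 2) ^ t := by
        gcongr
        rw [pSeq]; positivity

lemma not_summable_pSeq_mul_aSeq_rpow {t : ℝ} (ht : 0 < t) :
    ¬ Summable fun n : ℕ => pSeq n * aSeq n ^ t := by
  intro h
  have htend : Tendsto (fun k : ℕ => pSeq (k ^ 2) * aSeq (k ^ 2) ^ t) atTop (𝓝 0) :=
    h.tendsto_atTop_zero.comp (tendsto_pow_atTop two_ne_zero)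
  have hbound : ∀ᶠ k : ℕ in atTop, 6 / π ^ 2 ≤ pSeq (k ^ 2) * aSeq (k ^ 2) ^ t := by
    filter_upwards [eventually_ge_atTop 1,
      (tendsto_natCast_atTop_atTop.atTop_mul_const ht).eventually_ge_atTop 4] with k hk hkt
    exact pSeq_mul_aSeq_rpow_sq_ge hk hkt
  have : (0 : ℝ) < 6 / π ^ 2 := by positivity
  exact this.not_ge (ge_of_tendsto htend hbound)

/-- For `pₙ = (6/π²)n^{−2}` and `aₙ = 1/n` off squares, `aₙ = (√n)^{√n}` on squares, the measure
`μ = Σₙ pₙ δ_{fₙ}` (with `ρ(fₙ) = aₙ`) satisfies `χ_μ = Σₙ pₙ log aₙ ∈ (−∞, 0)`, i.e. the series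
converges and has negative sum, while `Σₙ pₙ aₙ^t = ∞` for every `t > 0`. -/
theorem pathological_contraction_example :
    (Summable fun n : ℕ => pSeq (n + 1) * Real.log (aSeq (n + 1))) ∧
    (∑' n : ℕ, pSeq (n + 1) * Real.log (aSeq (n + 1))) < 0 ∧
    (∀ t : ℝ, 0 < t → ¬ Summable fun n : ℕ => pSeq (n + 1) * aSeq (n + 1) ^ t) := by
  refine ⟨(summable_nat_add_iff 1).2 summable_chiSummand, ?_,
    fun t ht h => not_summable_pSeq_mul_aSeq_rpow ht ((summable_nat_add_iff 1).1 h)⟩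
  have hshift := summable_chiSummand.tsum_eq_zero_add
  rw [chiSummand_zero, zero_add] at hshift
  exact hshift ▸ tsum_chiSummand_neg
end

section
/- Let μ be a finitely supported probability measure on similarities of ℝ^d without a common fixed point, with χ_μ < 0, and with some g₀ ∈ supp(μ) having ρ(g₀) > 1. Let ν be the unique μ-stationary measure. Then there is α₁ = α₁(μ) > 0 such that for every x ∈ ℝ^d, ν(B_R(x)ᶜ) ≫_{μ,x} R^{−α₁} for all R ≥ 1. In particular, one can take α₁ = −log p₀ / log ρ₀ where p₀ = μ({g₀}) and ρ₀ = ρ(g₀). -/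
/-!
Write `g₀ = g i₀`, `ρ = r i₀ > 1`, `p₀ = p i₀` and let `x₀` be the fixed point of the expanding
similarity `g₀`. Since the preimage of `B(x₀, ρ t)ᶜ` under `g₀` is `B(x₀, t)ᶜ`, stationarity
gives `ν(B(x₀, ρ t)ᶜ) ≥ p₀ ν(B(x₀, t)ᶜ)`, hence `ν(B(x₀, ρⁿ s)ᶜ) ≥ p₀ⁿ ν(B(x₀, s)ᶜ)`; the right
side is positive for some `s` because a stationary measure cannot be the Dirac mass at a point
that is not a common fixed point. Interpolating between the radii `ρⁿ s` turns
`p₀ⁿ = (ρⁿ)^(-α₁)` into `R^(-α₁)`, and moving the centre from `x₀` to `x` only costs the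
constant factor `(1 + dist x x₀)^(-α₁)`.
-/

open MeasureTheory Metric Real BoundedContinuousFunction

theorem lt_sum_of_pos_of_ne {ι : Type*} [Fintype ι] {p : ι → ℝ} (hp : ∀ i, 0 < p i) {i j : ι}
    (hij : i ≠ j) : p i < ∑ k, p k := by
  classical
  calc p i < p i + p j := lt_add_of_pos_right _ (hp j)
    _ = ∑ k ∈ {i, j}, p k := (Finset.sum_pair hij).symm
    _ ≤ ∑ k, p k := Finset.sum_le_univ_sum_of_nonneg fun k => (hp k).le

section Similarity

variable {E : Type*} [NormedAddCommGroup E] [NormedSpace ℝ E]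

theorem dist_smul_linearIsometryEquiv_add (r : ℝ) (U : E ≃ₗᵢ[ℝ] E) (b y z : E) :
    dist (r • U y + b) (r • U z + b) = |r| * dist y z := by
  rw [dist_add_right, dist_smul₀, dist_eq_norm, dist_eq_norm, ← map_sub, U.norm_map,
    Real.norm_eq_abs]

theorem exists_smul_linearIsometryEquiv_add_eq_self [FiniteDimensional ℝ E] {r : ℝ}
    (hr : |r| ≠ 1) (U : E ≃ₗᵢ[ℝ] E) (b : E) : ∃ x, r • U x + b = x := by
  set L : E →ₗ[ℝ] E := LinearMap.id - r • U.toLinearEquiv.toLinearMap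
  have hL : ∀ x, L x = x - r • U x := fun _ => rfl
  have hinj : Function.Injective L := by
    rw [← LinearMap.ker_eq_bot, LinearMap.ker_eq_bot']
    intro m hm
    have hnorm : ‖m‖ = |r| * ‖m‖ := by
      conv_lhs => rw [sub_eq_zero.1 ((hL m).symm.trans hm)]
      rw [norm_smul, U.norm_map, Real.norm_eq_abs]
    by_contra hm0
    exact hr (mul_eq_right₀ (norm_ne_zero_iff.2 hm0) |>.1 hnorm.symm)
  obtain ⟨x, hx⟩ := LinearMap.injective_iff_surjective.1 hinj b
  exact ⟨x, by rw [← hx, hL]; abel⟩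

end Similarity

/-- Set-level form of `μ * ν = ν` for `μ = ∑ i, p i • δ_{g i}`. -/
def MeasureTheory.Measure.IsStationary {Ω ι : Type*} [MeasurableSpace Ω] [Fintype ι]
    (ν : Measure Ω) (p : ι → ℝ) (g : ι → Ω → Ω) : Prop :=
  ∀ S, MeasurableSet S → ν S = ∑ i, ENNReal.ofReal (p i) * ν (g i ⁻¹' S)

section Stationary

variable {Ω ι : Type*} [MeasurableSpace Ω] [Fintype ι] {p : ι → ℝ} {g : ι → Ω → Ω}
  {ν : Measure Ω}

theorem isStationary_of_forall_integral_eq [TopologicalSpace Ω] [HasOuterApproxClosed Ω]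
    [BorelSpace Ω] [IsFiniteMeasure ν] (hp : ∀ i, 0 ≤ p i) (hg : ∀ i, Continuous (g i))
    (hν : ∀ f : Ω →ᵇ ℝ, ∑ i, p i * ∫ x, f (g i x) ∂ν = ∫ x, f x ∂ν) :
    ν.IsStationary p g := by
  have _ : ∀ i, IsFiniteMeasure (ENNReal.ofReal (p i) • ν.map (g i)) := fun i =>
    (ν.map (g i)).smul_finite ENNReal.ofReal_ne_top
  have hsum : ν = ∑ i, ENNReal.ofReal (p i) • ν.map (g i) := by
    refine ext_of_forall_integral_eq_of_IsFiniteMeasure fun f => ?_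
    rw [integral_finsetSum_measure fun i _ => f.integrable _, ← hν f]
    refine Finset.sum_congr rfl fun i _ => ?_
    rw [integral_smul_measure,
      integral_map (hg i).aemeasurable f.continuous.aestronglyMeasurable,
      ENNReal.toReal_ofReal (hp i), smul_eq_mul]
  intro S hS
  nth_rw 1 [hsum]
  simp only [Measure.coe_finsetSum, Finset.sum_apply, Measure.smul_apply,
    Measure.map_apply (hg _).measurable hS, smul_eq_mul]

namespace MeasureTheory.Measure.IsStationary

theorem mul_measureReal_preimage_le [IsFiniteMeasure ν] (hν : ν.IsStationary p g)
    (hp : ∀ i, 0 ≤ p i) (i : ι) {S : Set Ω} (hS : MeasurableSet S) :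
    p i * ν.real (g i ⁻¹' S) ≤ ν.real S := by
  have hle : ENNReal.ofReal (p i) * ν (g i ⁻¹' S) ≤ ν S := by
    rw [hν S hS]
    exact Finset.single_le_sum (f := fun j => ENNReal.ofReal (p j) * ν (g j ⁻¹' S))
      (fun _ _ => zero_le) (Finset.mem_univ i)
  simpa only [measureReal_def, ENNReal.toReal_mul, ENNReal.toReal_ofReal (hp i)] using
    ENNReal.toReal_mono (measure_ne_top ν S) hle

theorem apply_eq_self_of_measure_compl_singleton_eq_zero [MeasurableSingletonClass Ω]
    [IsProbabilityMeasure ν] (hν : ν.IsStationary p g) (hp : ∀ i, 0 < p i) {x : Ω}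
    (hx : ν {x}ᶜ = 0) (i : ι) : g i x = x := by
  by_contra hne
  have hpre : ν (g i ⁻¹' {x}ᶜ) = 0 := by
    have hsum := (hν _ (measurableSet_singleton x).compl).symm.trans hx
    rw [Finset.sum_eq_zero_iff] at hsum
    exact (mul_eq_zero.1 (hsum i (Finset.mem_univ i))).resolve_left
      (ENNReal.ofReal_pos.2 (hp i)).ne'
  have hsingleton : ν {x} = 0 :=
    measure_mono_null (Set.singleton_subset_iff.2 hne) hpre
  simp [(prob_compl_eq_zero_iff (measurableSet_singleton x)).1 hx] at hsingleton

end MeasureTheory.Measure.IsStationary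

end Stationary

theorem exists_measure_compl_ball_pos {X : Type*} [MetricSpace X] [MeasurableSpace X]
    [OpensMeasurableSpace X] {ν : Measure X} {x : X} (hx : ν {x}ᶜ ≠ 0) :
    ∃ s, 0 < s ∧ s ≤ 1 ∧ 0 < ν (ball x s)ᶜ := by
  by_contra! h
  refine hx (measure_mono_null (fun y hy => ?_) (measure_iUnion_null fun n : ℕ =>
    le_zero_iff.1 (h (1 / (n + 1)) Nat.one_div_pos_of_nat
      (div_le_one_of_le₀ (by simp) (by positivity)))))
  obtain ⟨n, hn⟩ := exists_nat_one_div_lt (dist_pos.2 hy)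
  exact Set.mem_iUnion.2 ⟨n, fun hmem => (mem_ball.1 hmem).not_gt hn⟩

theorem exists_mul_rpow_le_of_forall_pow_mul_le {F : ℝ → ℝ} (hF : Antitone F) {ρ q s ε : ℝ}
    (hρ : 1 < ρ) (hq0 : 0 < q) (hq1 : q ≤ 1) (hs0 : 0 < s) (hs1 : s ≤ 1) (hε : 0 < ε)
    (h : ∀ n : ℕ, q ^ n * ε ≤ F (ρ ^ n * s)) :
    ∃ c > 0, ∀ R ≥ 1, c * R ^ (-(-log q / log ρ)) ≤ F R := by
  set α := -log q / log ρ with hα_def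
  have hρ0 : 0 < ρ := one_pos.trans hρ
  have hα : 0 ≤ α := div_nonneg (neg_nonneg.2 (log_nonpos hq0.le hq1)) (log_pos hρ).le
  have hq : ρ ^ (-α) = q := by
    rw [rpow_def_of_pos hρ0, hα_def, neg_div, neg_neg, mul_div_cancel₀ _ (log_pos hρ).ne',
      exp_log hq0]
  refine ⟨ε * q * s ^ α, by positivity, fun R hR => ?_⟩
  obtain ⟨n, hn, hRn⟩ := exists_nat_pow_near ((one_le_div hs0).2 (hs1.trans hR)) hρ
  calc ε * q * s ^ α * R ^ (-α) = ε * q * (R / s) ^ (-α) := by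
        rw [div_rpow (by linarith) hs0.le, rpow_neg hs0.le, div_inv_eq_mul]; ring
    _ ≤ ε * q * (ρ ^ n) ^ (-α) :=
        mul_le_mul_of_nonneg_left
          (rpow_le_rpow_of_nonpos (by positivity) hn (neg_nonpos.2 hα)) (by positivity)
    _ = q ^ (n + 1) * ε := by rw [← rpow_pow_comm hρ0.le, hq, pow_succ]; ring
    _ ≤ F (ρ ^ (n + 1) * s) := h (n + 1)
    _ ≤ F R := hF ((div_le_iff₀ hs0).1 hRn.le)

section Tails

variable {X : Type*} [PseudoMetricSpace X] [MeasurableSpace X] {ν : Measure X}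

theorem antitone_measureReal_compl_ball [IsFiniteMeasure ν] (x : X) :
    Antitone fun R => ν.real (ball x R)ᶜ :=
  fun _ _ hR => measureReal_mono (Set.compl_subset_compl.2 (ball_subset_ball hR))

theorem exists_mul_rpow_le_measureReal_compl_ball_of_center [IsFiniteMeasure ν] {x₀ : X}
    {c α : ℝ} (hc : 0 < c) (h : ∀ R ≥ 1, c * R ^ (-α) ≤ ν.real (ball x₀ R)ᶜ) (x : X) :
    ∃ c' > 0, ∀ R ≥ 1, c' * R ^ (-α) ≤ ν.real (ball x R)ᶜ := by
  set D := dist x x₀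
  have hD : 0 ≤ D := dist_nonneg
  refine ⟨c * (1 + D) ^ (-α), by positivity, fun R hR => ?_⟩
  have hball : ball x R ⊆ ball x₀ ((1 + D) * R) := ball_subset (by nlinarith)
  calc c * (1 + D) ^ (-α) * R ^ (-α) = c * ((1 + D) * R) ^ (-α) := by
        rw [mul_rpow (by positivity) (by positivity), mul_assoc]
    _ ≤ ν.real (ball x₀ ((1 + D) * R))ᶜ := h _ (by nlinarith)
    _ ≤ ν.real (ball x R)ᶜ := measureReal_mono (Set.compl_subset_compl.2 hball)

theorem pow_mul_measureReal_compl_ball_le [OpensMeasurableSpace X] {f : X → X} {x₀ : X}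
    {ρ q : ℝ} (hρ : 0 < ρ) (hf : ∀ y, dist (f y) x₀ = ρ * dist y x₀) (hq : 0 ≤ q)
    (hν : ∀ S, MeasurableSet S → q * ν.real (f ⁻¹' S) ≤ ν.real S) (s : ℝ) (n : ℕ) :
    q ^ n * ν.real (ball x₀ s)ᶜ ≤ ν.real (ball x₀ (ρ ^ n * s))ᶜ := by
  induction n with
  | zero => simp
  | succ n ih =>
    have hpre : f ⁻¹' (ball x₀ (ρ ^ (n + 1) * s))ᶜ = (ball x₀ (ρ ^ n * s))ᶜ := by
      ext y
      simp only [Set.mem_preimage, Set.mem_compl_iff, mem_ball, hf, pow_succ', mul_assoc,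
        mul_lt_mul_iff_right₀ hρ]
    calc q ^ (n + 1) * ν.real (ball x₀ s)ᶜ = q * (q ^ n * ν.real (ball x₀ s)ᶜ) := by ring
      _ ≤ q * ν.real (ball x₀ (ρ ^ n * s))ᶜ := mul_le_mul_of_nonneg_left ih hq
      _ ≤ ν.real (ball x₀ (ρ ^ (n + 1) * s))ᶜ := hpre ▸ hν _ measurableSet_ball.compl

end Tails

theorem selfSimilar_polynomial_lower_bound_general
    {d : ℕ} {k : ℕ}
    (r : Fin k → ℝ)
    (U : Fin k → (EuclideanSpace ℝ (Fin d) ≃ₗᵢ[ℝ] EuclideanSpace ℝ (Fin d)))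
    (b : Fin k → EuclideanSpace ℝ (Fin d))
    (g : Fin k → EuclideanSpace ℝ (Fin d) → EuclideanSpace ℝ (Fin d))
    (hg : ∀ i x, g i x = r i • U i x + b i)
    (p : Fin k → ℝ) (hp : ∀ i, 0 < p i) (hpsum : ∑ i, p i = 1)
    (hnofix : ¬ ∃ x : EuclideanSpace ℝ (Fin d), ∀ i, g i x = x)
    (i₀ : Fin k) (hi₀ : 1 < r i₀)
    (ν : Measure (EuclideanSpace ℝ (Fin d))) [IsProbabilityMeasure ν]
    (hν : ∀ f : BoundedContinuousFunction (EuclideanSpace ℝ (Fin d)) ℝ,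
      ∑ i, p i * ∫ x, f (g i x) ∂ν = ∫ x, f x ∂ν) :
    0 < -Real.log (p i₀) / Real.log (r i₀) ∧
    ∀ x : EuclideanSpace ℝ (Fin d), ∃ c > (0 : ℝ), ∀ R ≥ (1 : ℝ),
      c * R ^ (-(-Real.log (p i₀) / Real.log (r i₀)))
        ≤ (ν (ball x R)ᶜ).toReal := by
  have hρ : 0 < r i₀ := one_pos.trans hi₀
  have hgc : ∀ i, Continuous (g i) := fun i => by rw [show g i = _ from funext (hg i)]; fun_prop
  have hstat : ν.IsStationary p g :=
    isStationary_of_forall_integral_eq (fun i => (hp i).le) hgc hν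
  obtain ⟨x₀, hx₀⟩ : ∃ x₀, g i₀ x₀ = x₀ := by
    simp only [hg]
    exact exists_smul_linearIsometryEquiv_add_eq_self
      (by rw [abs_of_pos hρ]; exact hi₀.ne') _ _
  have hdist : ∀ y, dist (g i₀ y) x₀ = r i₀ * dist y x₀ := fun y => by
    conv_lhs => rw [← hx₀]
    rw [hg, hg, dist_smul_linearIsometryEquiv_add, abs_of_pos hρ]
  obtain ⟨j, hj⟩ : ∃ j, g j x₀ ≠ x₀ := not_forall.1 fun h => hnofix ⟨x₀, h⟩
  have hp₀ : p i₀ < 1 := hpsum ▸ lt_sum_of_pos_of_ne hp fun h : i₀ = j => hj (h ▸ hx₀)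
  obtain ⟨s, hs0, hs1, hs⟩ := exists_measure_compl_ball_pos fun h =>
    hj (hstat.apply_eq_self_of_measure_compl_singleton_eq_zero hp h j)
  have hgrowth : ∀ n : ℕ, p i₀ ^ n * ν.real (ball x₀ s)ᶜ ≤ ν.real (ball x₀ (r i₀ ^ n * s))ᶜ :=
    pow_mul_measureReal_compl_ball_le hρ hdist (hp i₀).le
      (fun _ hS => hstat.mul_measureReal_preimage_le (fun i => (hp i).le) i₀ hS) s
  obtain ⟨c, hc, hbound⟩ := exists_mul_rpow_le_of_forall_pow_mul_le
    (antitone_measureReal_compl_ball x₀) hi₀ (hp i₀) hp₀.le hs0 hs1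
    (ENNReal.toReal_pos hs.ne' (measure_ne_top ν _)) hgrowth
  exact ⟨div_pos (neg_pos.2 (log_neg (hp i₀) hp₀)) (log_pos hi₀),
    exists_mul_rpow_le_measureReal_compl_ball_of_center hc hbound⟩

/-- Polynomial lower bound for tails of self-similar measures. Let `μ = Σᵢ pᵢ δ_{gᵢ}` be a
finitely supported probability measure on similarities `gᵢ(x) = rᵢ·Uᵢx + bᵢ` of `ℝ^d` without a
common fixed point, with contraction rate `χ_μ = Σᵢ pᵢ log rᵢ < 0`, and suppose some `g_{i₀}` in
the support has ratio `r_{i₀} > 1`. Let `ν` be the unique `μ`-stationary (self-similar) measure.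
Then with `α₁ = −log p_{i₀} / log r_{i₀} > 0`, for every `x ∈ ℝ^d` one has
`ν(B_R(x)ᶜ) ≫_{μ,x} R^{−α₁}` for all `R ≥ 1`. -/
theorem selfSimilar_polynomial_lower_bound
    {d : ℕ} {k : ℕ}
    (r : Fin k → ℝ) (hr : ∀ i, 0 < r i)
    (U : Fin k → (EuclideanSpace ℝ (Fin d) ≃ₗᵢ[ℝ] EuclideanSpace ℝ (Fin d)))
    (b : Fin k → EuclideanSpace ℝ (Fin d))
    (g : Fin k → EuclideanSpace ℝ (Fin d) → EuclideanSpace ℝ (Fin d))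
    (hg : ∀ i x, g i x = r i • U i x + b i)
    (p : Fin k → ℝ) (hp : ∀ i, 0 < p i) (hpsum : ∑ i, p i = 1)
    (hnofix : ¬ ∃ x : EuclideanSpace ℝ (Fin d), ∀ i, g i x = x)
    (hchi : ∑ i, p i * Real.log (r i) < 0)
    (i₀ : Fin k) (hi₀ : 1 < r i₀)
    (ν : Measure (EuclideanSpace ℝ (Fin d))) [IsProbabilityMeasure ν]
    (hν : ∀ f : BoundedContinuousFunction (EuclideanSpace ℝ (Fin d)) ℝ,
      ∑ i, p i * ∫ x, f (g i x) ∂ν = ∫ x, f x ∂ν) :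
    0 < -Real.log (p i₀) / Real.log (r i₀) ∧
    ∀ x : EuclideanSpace ℝ (Fin d), ∃ c > (0 : ℝ), ∀ R ≥ (1 : ℝ),
      c * R ^ (-(-Real.log (p i₀) / Real.log (r i₀)))
        ≤ (ν (ball x R)ᶜ).toReal :=
  selfSimilar_polynomial_lower_bound_general r U b g hg p hp hpsum hnofix i₀ hi₀ ν hν
end
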